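/- arXiv:2002.07324 — 3 statements merged into one kernel-verified Lean document; each statement's English description precedes it below -/
import Mathlib

section
/- Let Δ and K be positive definite p×p real symmetric matrices with K' positive definite and K ≻ K' (K - K' positive definite). Then ((Δ + K')^{-1} + (K - K')^{-1})^{-1} = K' (Δ^{-1} + K'^{-1}) [ (Δ^{-1} + K^{-1})^{-1} - (Δ^{-1} + K'^{-1})^{-1} ] (Δ^{-1} + K'^{-1}) K'. -/
open Matrix

/-! With `s = a + b` and `s' = a + c`, the formula `(x⁻¹ + y⁻¹)⁻¹ = x - x (x + y)⁻¹ x` turns the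
left-hand side into `s' - s' s⁻¹ s' = s' (s'⁻¹ - s⁻¹) s'` and the bracket on the right into
`a (s'⁻¹ - s⁻¹) a`, while `c (a⁻¹ + c⁻¹) = s' a⁻¹` and `(a⁻¹ + c⁻¹) c = a⁻¹ s'` cancel the outer
factors `a`. Matrix inversion is `Ring.inverse`, so the identity holds in any ring. -/

namespace Ring

variable {R : Type*} [Ring R] {a b c : R}

theorem mul_inverse_add_inverse (ha : IsUnit a) (hb : IsUnit b) :
    b * (a⁻¹ʳ + b⁻¹ʳ) = (a + b) * a⁻¹ʳ := by
  rw [mul_add, add_mul, mul_inverse_cancel b hb, mul_inverse_cancel a ha, add_comm]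

theorem inverse_add_inverse_mul (ha : IsUnit a) (hb : IsUnit b) :
    (a⁻¹ʳ + b⁻¹ʳ) * b = a⁻¹ʳ * (a + b) := by
  rw [mul_add, add_mul, inverse_mul_cancel b hb, inverse_mul_cancel a ha, add_comm]

theorem inverse_inverse_add_inverse (ha : IsUnit a) (hb : IsUnit b) :
    (a⁻¹ʳ + b⁻¹ʳ)⁻¹ʳ = b * (a + b)⁻¹ʳ * a := by
  rw [inverse_add_inverse (iff_of_true ha hb), inverse_mul (.inr hb.ringInverse),
    inverse_mul (.inl ha.ringInverse), inverse_inverse ha, inverse_inverse hb, mul_assoc]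

theorem inverse_inverse_add_inverse_eq_sub (ha : IsUnit a) (hb : IsUnit b)
    (hab : IsUnit (a + b)) : (a⁻¹ʳ + b⁻¹ʳ)⁻¹ʳ = a - a * (a + b)⁻¹ʳ * a := by
  rw [inverse_inverse_add_inverse ha hb, ← add_sub_cancel_left a b, sub_mul, sub_mul,
    add_sub_cancel_left, mul_inverse_cancel _ hab, one_mul]

theorem inverse_inverse_add_inverse_add_sub (ha : IsUnit a) (hb : IsUnit b) (hc : IsUnit c)
    (hab : IsUnit (a + b)) (hac : IsUnit (a + c)) (hbc : IsUnit (b - c)) :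
    ((a + c)⁻¹ʳ + (b - c)⁻¹ʳ)⁻¹ʳ =
      c * (a⁻¹ʳ + c⁻¹ʳ) * ((a⁻¹ʳ + b⁻¹ʳ)⁻¹ʳ - (a⁻¹ʳ + c⁻¹ʳ)⁻¹ʳ) * (a⁻¹ʳ + c⁻¹ʳ) * c := by
  have hsum : a + c + (b - c) = a + b := by abel
  have hdiff : (a⁻¹ʳ + b⁻¹ʳ)⁻¹ʳ - (a⁻¹ʳ + c⁻¹ʳ)⁻¹ʳ = a * ((a + c)⁻¹ʳ - (a + b)⁻¹ʳ) * a := by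
    rw [inverse_inverse_add_inverse_eq_sub ha hb hab, inverse_inverse_add_inverse_eq_sub ha hc hac]
    noncomm_ring
  calc ((a + c)⁻¹ʳ + (b - c)⁻¹ʳ)⁻¹ʳ
      = (a + c) - (a + c) * (a + b)⁻¹ʳ * (a + c) := by
        rw [inverse_inverse_add_inverse_eq_sub hac hbc (hsum ▸ hab), hsum]
    _ = (a + c) * ((a + c)⁻¹ʳ - (a + b)⁻¹ʳ) * (a + c) := by
        rw [mul_sub, sub_mul, mul_inverse_cancel _ hac, one_mul]
    _ = ((a + c) * a⁻¹ʳ) * (a * ((a + c)⁻¹ʳ - (a + b)⁻¹ʳ) * a) * (a⁻¹ʳ * (a + c)) := by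
        simp only [mul_assoc, inverse_mul_cancel_left _ _ ha, mul_inverse_cancel_left _ _ ha]
    _ = _ := by
        rw [← mul_inverse_add_inverse ha hc, ← inverse_add_inverse_mul ha hc, ← hdiff]
        simp only [mul_assoc]

end Ring

/-- Woodbury-based identity:
`((Δ + K')⁻¹ + (K - K')⁻¹)⁻¹ = K' (Δ⁻¹ + K'⁻¹) [(Δ⁻¹ + K⁻¹)⁻¹ - (Δ⁻¹ + K'⁻¹)⁻¹] (Δ⁻¹ + K'⁻¹) K'`. -/
theorem stmt1 {p : ℕ} (Δ K K' : Matrix (Fin p) (Fin p) ℝ)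
    (hΔ : Δ.PosDef) (hK : K.PosDef) (hK' : K'.PosDef) (hdeg : (K - K').PosDef) :
    ((Δ + K')⁻¹ + (K - K')⁻¹)⁻¹ =
      K' * (Δ⁻¹ + K'⁻¹) * ((Δ⁻¹ + K⁻¹)⁻¹ - (Δ⁻¹ + K'⁻¹)⁻¹) * (Δ⁻¹ + K'⁻¹) * K' := by
  simp only [nonsing_inv_eq_ringInverse]
  exact Ring.inverse_inverse_add_inverse_add_sub hΔ.isUnit hK.isUnit hK'.isUnit
    (hΔ.add hK).isUnit (hΔ.add hK').isUnit hdeg.isUnit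
end

section
/- Let γ ∈ (0,1) and Δ_i, K_i positive definite p×p symmetric matrices. With Σ(γ) the block matrix with blocks (γ/(1-γ))Δ_i, -Δ_i, -Δ_i, ((1-γ)/γ)(Δ_i+K_i), its entrywise derivative in γ is the block-diagonal matrix diag((1/(1-γ)²)Δ_i, -(1/γ²)(Δ_i+K_i)), and trace((dΣ/dγ) Σ(γ)^{-1}) = 0. -/
/-!
The inverse of `Σ(γ)` is explicit: `fromBlocks (b • (Δ⁻¹ + K⁻¹)) K⁻¹ K⁻¹ (a • K⁻¹)` with
`a = γ/(1-γ)`, `b = 1/a`. Multiplying by the block-diagonal derivative, both diagonal blocks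
contribute `tr(1 + ΔK⁻¹) / (γ(1-γ))`, with opposite signs. (Conceptually, by Jacobi's formula the
trace is `d/dγ log det Σ(γ)`, and the Schur complement gives `det Σ(γ) = det Δ · det K`.)
-/

open Matrix

section Blocks

variable {n R : Type*} [Fintype n]

theorem Matrix.trace_fromBlocks [AddCommMonoid R] (A B C D : Matrix n n R) :
    (fromBlocks A B C D).trace = A.trace + D.trace := by
  simp [trace, Fintype.sum_sum_type]

variable [DecidableEq n] [CommRing R] {Δ K : Matrix n n R}

theorem Matrix.inv_fromBlocks_smul_neg_smul_add (hΔ : IsUnit Δ.det) (hK : IsUnit K.det)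
    {a b : R} (hab : a * b = 1) :
    (fromBlocks (a • Δ) (-Δ) (-Δ) (b • (Δ + K)))⁻¹ =
      fromBlocks (b • (Δ⁻¹ + K⁻¹)) K⁻¹ K⁻¹ (a • K⁻¹) := by
  have hba : b * a = 1 := by rw [mul_comm, hab]
  apply inv_eq_right_inv
  rw [fromBlocks_multiply, ← fromBlocks_one]
  simp only [mul_add, add_mul, Δ.mul_nonsing_inv hΔ, K.mul_nonsing_inv hK, Matrix.neg_mul,
    smul_mul_assoc, mul_smul_comm, smul_smul, hab, hba, one_smul, smul_add, smul_neg]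
  congr 1 <;> abel

theorem Matrix.trace_fromBlocks_smul_mul_fromBlocks (hΔ : IsUnit Δ.det) (hK : IsUnit K.det)
    (a b c e : R) :
    (fromBlocks (c • Δ) 0 0 (e • (Δ + K)) *
        fromBlocks (b • (Δ⁻¹ + K⁻¹)) K⁻¹ K⁻¹ (a • K⁻¹)).trace =
      (c * b + e * a) * (Fintype.card n + (Δ * K⁻¹).trace) := by
  simp only [fromBlocks_multiply, trace_fromBlocks, Matrix.zero_mul, add_zero, zero_add,
    smul_mul_smul_comm, trace_smul, mul_add, add_mul, Δ.mul_nonsing_inv hΔ,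
    K.mul_nonsing_inv hK, trace_add, trace_one, smul_eq_mul]
  ring

end Blocks

theorem Matrix.hasDerivAt_fromBlocks_smul_apply {m n : Type*} {f g : ℝ → ℝ} {f' g' x : ℝ}
    (hf : HasDerivAt f f' x) (hg : HasDerivAt g g' x) (A : Matrix m m ℝ) (B : Matrix m n ℝ)
    (C : Matrix n m ℝ) (D : Matrix n n ℝ) (i j : m ⊕ n) :
    HasDerivAt (fun t => fromBlocks (f t • A) B C (g t • D) i j)
      (fromBlocks (f' • A) 0 0 (g' • D) i j) x := by
  rcases i with i | i <;> rcases j with j | j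
  · simpa using hf.mul_const (A i j)
  · simpa using hasDerivAt_const x (B i j)
  · simpa using hasDerivAt_const x (C i j)
  · simpa using hg.mul_const (D i j)

theorem hasDerivAt_div_one_sub {x : ℝ} (hx : x ≠ 1) :
    HasDerivAt (fun t => t / (1 - t)) (1 / (1 - x) ^ 2) x := by
  have h1x : 1 - x ≠ 0 := sub_ne_zero.mpr hx.symm
  refine ((hasDerivAt_id' x).div ((hasDerivAt_id' x).const_sub 1) h1x).congr_deriv ?_
  field_simp
  ring

theorem hasDerivAt_one_sub_div {x : ℝ} (hx : x ≠ 0) :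
    HasDerivAt (fun t => (1 - t) / t) (-(1 / x ^ 2)) x := by
  refine (((hasDerivAt_id' x).const_sub 1).div (hasDerivAt_id' x) hx).congr_deriv ?_
  field_simp
  ring

/-- The entrywise derivative in `γ` of
`Σ(γ) = fromBlocks ((γ/(1-γ))Δ) (-Δ) (-Δ) (((1-γ)/γ)(Δ+K))` is the block-diagonal matrix
`diag((1/(1-γ)²)Δ, -(1/γ²)(Δ+K))`, and `trace((dΣ/dγ) Σ(γ)⁻¹) = 0`. -/
theorem stmt4 {p : ℕ} (γ : ℝ) (hγ : γ ∈ Set.Ioo (0 : ℝ) 1)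
    (Δ K : Matrix (Fin p) (Fin p) ℝ) (hΔ : Δ.PosDef) (hK : K.PosDef) :
    (∀ i j : Fin p ⊕ Fin p,
      HasDerivAt
        (fun t : ℝ =>
          Matrix.fromBlocks ((t / (1 - t)) • Δ) (-Δ) (-Δ) (((1 - t) / t) • (Δ + K)) i j)
        (Matrix.fromBlocks ((1 / (1 - γ) ^ 2) • Δ) 0 0 (-(1 / γ ^ 2) • (Δ + K)) i j) γ) ∧
    Matrix.trace
      (Matrix.fromBlocks ((1 / (1 - γ) ^ 2) • Δ) 0 0 (-(1 / γ ^ 2) • (Δ + K)) *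
        (Matrix.fromBlocks ((γ / (1 - γ)) • Δ) (-Δ) (-Δ) (((1 - γ) / γ) • (Δ + K)))⁻¹) = 0 := by
  obtain ⟨hγ0, hγ1⟩ := hγ
  have hγ0' : γ ≠ 0 := hγ0.ne'
  have hγ1' : 1 - γ ≠ 0 := sub_ne_zero.mpr hγ1.ne'
  refine ⟨hasDerivAt_fromBlocks_smul_apply (hasDerivAt_div_one_sub hγ1.ne)
    (hasDerivAt_one_sub_div hγ0') _ _ _ _, ?_⟩
  have hΔ' : IsUnit Δ.det := hΔ.det_pos.ne'.isUnit
  have hK' : IsUnit K.det := hK.det_pos.ne'.isUnit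
  have hab : γ / (1 - γ) * ((1 - γ) / γ) = 1 := by field_simp
  rw [inv_fromBlocks_smul_neg_smul_add hΔ' hK' hab, trace_fromBlocks_smul_mul_fromBlocks hΔ' hK']
  have hcoeff : 1 / (1 - γ) ^ 2 * ((1 - γ) / γ) + -(1 / γ ^ 2) * (γ / (1 - γ)) = 0 := by
    field_simp
    ring
  rw [hcoeff, zero_mul]
end

section
/- Let K_0, K_i, K_{i+1}, Δ_i, D_i be positive definite p×p symmetric matrices with K_i ≻ K_{i+1} and Δ_i^{-1} + K_i^{-1} ⪰ D_i^{-1}. Then ((Δ_i + K_{i+1})^{-1} + (K_i − K_{i+1})^{-1})^{-1} ⪯ (K_i − K_{i+1}) K_i^{-1} (D_i + (K_{i+1}^{-1} − K_i^{-1})^{-1}) K_i^{-1} (K_i − K_{i+1}). -/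
/-!
With `C = Kᵢ - Kᵢ₊₁`, both `((Δ + Kᵢ₊₁)⁻¹ + C⁻¹)⁻¹` and
`C Kᵢ⁻¹ ((Δ⁻¹ + Kᵢ⁻¹)⁻¹ + (Kᵢ₊₁⁻¹ - Kᵢ⁻¹)⁻¹) Kᵢ⁻¹ C` equal `C (Δ + Kᵢ)⁻¹ (Δ + Kᵢ₊₁)`, using
`(A⁻¹ + B⁻¹)⁻¹ = B (A + B)⁻¹ A` and `Kᵢ₊₁ Kᵢ⁻¹ C = C Kᵢ⁻¹ Kᵢ₊₁`. Hence the difference of the two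
sides is the congruence `M (D - (Δ⁻¹ + Kᵢ⁻¹)⁻¹) Mᴴ` with `M = C Kᵢ⁻¹`, and
`D ⪰ (Δ⁻¹ + Kᵢ⁻¹)⁻¹` because inversion is antitone on positive definite matrices.
-/

open Matrix
open scoped ComplexOrder

namespace Matrix

variable {n : Type*} [Fintype n] [DecidableEq n]

section CommRing

variable {α : Type*} [CommRing α]

theorem inv_inv_add_inv {A B : Matrix n n α} (hA : IsUnit A) (hB : IsUnit B) :
    (A⁻¹ + B⁻¹)⁻¹ = B * (A + B)⁻¹ * A := by
  rw [inv_add_inv (iff_of_true hA hB), mul_inv_rev, mul_inv_rev,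
    nonsing_inv_nonsing_inv _ ((isUnit_iff_isUnit_det A).mp hA),
    nonsing_inv_nonsing_inv _ ((isUnit_iff_isUnit_det B).mp hB), Matrix.mul_assoc]

theorem inv_inv_sub_inv {A B : Matrix n n α} (hA : IsUnit A) (hB : IsUnit B) :
    (A⁻¹ - B⁻¹)⁻¹ = B * (B - A)⁻¹ * A := by
  rw [inv_sub_inv (iff_of_true hA hB), mul_inv_rev, mul_inv_rev,
    nonsing_inv_nonsing_inv _ ((isUnit_iff_isUnit_det A).mp hA),
    nonsing_inv_nonsing_inv _ ((isUnit_iff_isUnit_det B).mp hB), Matrix.mul_assoc]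

theorem mul_inv_mul_sub_comm (A B : Matrix n n α) [Invertible A] :
    B * A⁻¹ * (A - B) = (A - B) * A⁻¹ * B := by
  simp only [Matrix.mul_sub, Matrix.sub_mul, Matrix.mul_assoc, inv_mul_of_invertible,
    Matrix.mul_one, mul_inv_cancel_left_of_invertible]

theorem inv_inv_add_inv_sub_eq_conj {K K' Δ : Matrix n n α} (hK : IsUnit K) (hK' : IsUnit K')
    (hΔ : IsUnit Δ) (hKK' : IsUnit (K - K')) (hΔK : IsUnit (Δ + K)) (hΔK' : IsUnit (Δ + K')) :
    ((Δ + K')⁻¹ + (K - K')⁻¹)⁻¹ =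
      (K - K') * K⁻¹ * ((Δ⁻¹ + K⁻¹)⁻¹ + (K'⁻¹ - K⁻¹)⁻¹) * K⁻¹ * (K - K') := by
  rw [inv_inv_add_inv hΔK' hKK', inv_inv_add_inv hΔ hK, inv_inv_sub_inv hK' hK,
    show Δ + K' + (K - K') = Δ + K by abel]
  obtain ⟨_⟩ := hK.nonempty_invertible
  obtain ⟨_⟩ := hKK'.nonempty_invertible
  obtain ⟨_⟩ := hΔK.nonempty_invertible
  have hΔK'_eq : (Δ + K)⁻¹ * Δ * K⁻¹ * (K - K') + K⁻¹ * K' = (Δ + K)⁻¹ * (Δ + K') := by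
    refine mul_right_injective_of_invertible (Δ + K) ?_
    simp only [Matrix.mul_add, Matrix.add_mul, Matrix.mul_sub, Matrix.mul_assoc,
      mul_inv_cancel_left_of_invertible, inv_mul_of_invertible, Matrix.mul_one]
    abel
  calc (K - K') * (Δ + K)⁻¹ * (Δ + K')
      = (K - K') * ((Δ + K)⁻¹ * Δ * K⁻¹ * (K - K') + K⁻¹ * K') := by
        rw [hΔK'_eq, Matrix.mul_assoc]
    _ = (K - K') * ((Δ + K)⁻¹ * Δ * K⁻¹ * (K - K') + (K - K')⁻¹ * (K' * K⁻¹ * (K - K'))) := by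
        rw [mul_inv_mul_sub_comm]
        simp only [Matrix.mul_assoc, inv_mul_cancel_left_of_invertible]
    _ = _ := by
        simp only [Matrix.mul_add, Matrix.add_mul, Matrix.mul_assoc,
          inv_mul_cancel_left_of_invertible]

end CommRing

theorem posSemidef_inv_sub_inv {𝕜 : Type*} [RCLike 𝕜] {A B : Matrix n n 𝕜} (hB : B.PosDef)
    (hAB : (A - B).PosSemidef) : (B⁻¹ - A⁻¹).PosSemidef := by
  have hA : A.PosDef := by simpa using hB.add_posSemidef hAB
  obtain ⟨_⟩ := hA.isUnit.nonempty_invertible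
  obtain ⟨_⟩ := hB.isUnit.nonempty_invertible
  have key : B⁻¹ - A⁻¹ = (A⁻¹)ᴴ * ((A - B) + (A - B)ᴴ * B⁻¹ * (A - B)) * A⁻¹ := by
    rw [hA.isHermitian.inv.eq, hAB.isHermitian.eq]
    simp only [Matrix.mul_add, Matrix.add_mul, Matrix.mul_sub, Matrix.sub_mul, Matrix.mul_assoc,
      inv_mul_of_invertible, mul_inv_of_invertible, inv_mul_cancel_left_of_invertible,
      Matrix.mul_one, Matrix.one_mul]
    abel
  rw [key]
  exact (hAB.add (hB.inv.posSemidef.conjTranspose_mul_mul_same _)).conjTranspose_mul_mul_same _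

end Matrix

theorem stmt12_general {p : ℕ} (Ki Ki1 Δ D : Matrix (Fin p) (Fin p) ℝ)
    (hKi : Ki.PosDef) (hKi1 : Ki1.PosDef) (hΔ : Δ.PosDef) (hD : D.PosDef)
    (hdeg : (Ki - Ki1).PosDef) (hdist : (Δ⁻¹ + Ki⁻¹ - D⁻¹).PosSemidef) :
    ((Ki - Ki1) * Ki⁻¹ * (D + (Ki1⁻¹ - Ki⁻¹)⁻¹) * Ki⁻¹ * (Ki - Ki1) -
      ((Δ + Ki1)⁻¹ + (Ki - Ki1)⁻¹)⁻¹).PosSemidef := by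
  have hcore : (D - (Δ⁻¹ + Ki⁻¹)⁻¹).PosSemidef := by
    simpa only [nonsing_inv_nonsing_inv D ((isUnit_iff_isUnit_det D).mp hD.isUnit)]
      using posSemidef_inv_sub_inv hD.inv hdist
  have hM : ((Ki - Ki1) * Ki⁻¹)ᴴ = Ki⁻¹ * (Ki - Ki1) := by
    rw [conjTranspose_mul, hKi.isHermitian.inv.eq, hdeg.isHermitian.eq]
  rw [inv_inv_add_inv_sub_eq_conj hKi.isUnit hKi1.isUnit hΔ.isUnit hdeg.isUnit
    (hΔ.add hKi).isUnit (hΔ.add hKi1).isUnit]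
  convert hcore.mul_mul_conjTranspose_same ((Ki - Ki1) * Ki⁻¹) using 1
  rw [hM]
  noncomm_ring

/-- Loewner bound:
`((Δ + K₊)⁻¹ + (K - K₊)⁻¹)⁻¹ ⪯ (K - K₊) K⁻¹ (D + (K₊⁻¹ - K⁻¹)⁻¹) K⁻¹ (K - K₊)`
under `K ≻ K₊ ≻ 0` and `Δ⁻¹ + K⁻¹ ⪰ D⁻¹`. -/
theorem stmt12 {p : ℕ} (K0 Ki Ki1 Δ D : Matrix (Fin p) (Fin p) ℝ)
    (hK0 : K0.PosDef) (hKi : Ki.PosDef) (hKi1 : Ki1.PosDef) (hΔ : Δ.PosDef) (hD : D.PosDef)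
    (hdeg : (Ki - Ki1).PosDef) (hdist : (Δ⁻¹ + Ki⁻¹ - D⁻¹).PosSemidef) :
    ((Ki - Ki1) * Ki⁻¹ * (D + (Ki1⁻¹ - Ki⁻¹)⁻¹) * Ki⁻¹ * (Ki - Ki1) -
      ((Δ + Ki1)⁻¹ + (Ki - Ki1)⁻¹)⁻¹).PosSemidef :=
  stmt12_general Ki Ki1 Δ D hKi hKi1 hΔ hD hdeg hdist
end
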